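/- Let f belong to (an equivalence class in) L^2(P̃_X), let h be a linear game value with coefficients w_i(S,N), and let D = {X^(1),…,X^(K)} be K independent random samples from P_X. Then for P_X-almost every x* ∈ ℝ^n and every i ∈ N, E[ |h_i[N, v^{ME}(·; x*, X, f)] − h_i[N, v̂^{ME}(·; x*, D, f)]|² ] ≤ (2/K) · ( Σ_{S⊆N∖{i}} w_i(S,N)² ) · ( Σ_{S⊆N} Var(f(x*_S, X_{-S})) ) < ∞. -/

import Mathlib

open MeasureTheory ProbabilityTheory ENNReal Filter Finset

noncomputable section

/-- Discrete σ-algebra on the (finite) space of coalitions. -/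
instance {k : ℕ} : MeasurableSpace (Finset (Fin k)) := ⊤

/-- `merge n S y x` is the vector in `ℝ^n` agreeing with `y` on `S` and with `x` on `N∖S`,
i.e. the vector `(y_S, x_{-S})`. -/
def merge (n : ℕ) (S : Finset (Fin n)) (y x : Fin n → ℝ) : Fin n → ℝ :=
  fun i => if i ∈ S then y i else x i

/-- The product measure `P_{X_S} ⊗ P_{X_{-S}}` viewed as a measure on `ℝ^n`
(obtained by merging two independent copies along `S`). -/
def prodPart (n : ℕ) (P : Measure (Fin n → ℝ)) (S : Finset (Fin n)) :
    Measure (Fin n → ℝ) :=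
  (P.prod P).map (fun q => merge n S q.1 q.2)

/-- The mixture measure `P̃_X = 2^{-n} ∑_{S ⊆ N} P_{X_S} ⊗ P_{X_{-S}}` on `ℝ^n`. -/
def tildeP (n : ℕ) (P : Measure (Fin n → ℝ)) : Measure (Fin n → ℝ) :=
  ((2 : ℝ≥0∞) ^ n)⁻¹ • ∑ S : Finset (Fin n), prodPart n P S

/-- The marginal game `v^{ME}(S; x*, X, f) = E[f(x*_S, X_{-S})]`. -/
def vME (n : ℕ) (P : Measure (Fin n → ℝ)) (f : (Fin n → ℝ) → ℝ)
    (xs : Fin n → ℝ) (S : Finset (Fin n)) : ℝ :=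
  ∫ x, f (merge n S xs x) ∂P

/-- A linear game value `h_i[N,v] = ∑_{S ⊆ N∖{i}} w(S) (v(S∪{i}) - v(S))`. -/
def gameValue (n : ℕ) (w : Finset (Fin n) → ℝ) (i : Fin n)
    (v : Finset (Fin n) → ℝ) : ℝ :=
  ∑ S ∈ (univ.erase i).powerset, w S * (v (insert i S) - v S)

/-- The discrete measure on subsets of `D` assigning mass `w T` to each `T ⊆ D`.
For `D = N∖{i}` and nonnegative weights summing to one this is `P_i^{(h)}`. -/
def subsetMeasure (k : ℕ) (D : Finset (Fin k)) (w : Finset (Fin k) → ℝ) :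
    Measure (Finset (Fin k)) :=
  ∑ T ∈ D.powerset, (ENNReal.ofReal (w T)) • Measure.dirac T

/-- `Δ_i(S, x; x*, f) = f(x*_{S∪{i}}, x_{-(S∪{i})}) - f(x*_S, x_{-S})`. -/
def deltaFun (n : ℕ) (f : (Fin n → ℝ) → ℝ) (i : Fin n) (xs : Fin n → ℝ) :
    Finset (Fin n) × (Fin n → ℝ) → ℝ :=
  fun q => f (merge n (insert i q.1) xs q.2) - f (merge n q.1 xs q.2)

/-! The estimation error of `h_i` is `∑_{S ⊆ N∖{i}} w(S) e_S`, where `e_S` is the Monte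
Carlo error of the empirical mean of `Δ_S = f(x*_{S∪{i}}, ·) - f(x*_S, ·)` over the `K`
samples. Cauchy–Schwarz separates the weights; by independence `E[e_S²] = Var(Δ_S)/K`, and
`Var(Δ_S) ≤ 2 Var f(x*_{S∪{i}}, ·) + 2 Var f(x*_S, ·)`; as `S` runs over the subsets of
`N∖{i}`, the coalitions `S` and `S ∪ {i}` run over all of `2^N` exactly once.

Integrability: `P_{X_S} ⊗ P_{X_{-S}} ≤ 2^n P̃_X`, so `f ∘ merge` is in `L²(P_X ⊗ P_X)`, and
by Fubini its sections `f(x*_S, ·)` are in `L²(P_X)` for `P_X`-almost every `x*`. -/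

lemma MeasureTheory.MemLp.prod_right_ae {α β F : Type*} [MeasurableSpace α] [MeasurableSpace β]
    [NormedAddCommGroup F] {μ : Measure α} {ν : Measure β} [SFinite μ] [SFinite ν]
    {f : α × β → F} (hf : MemLp f 2 (μ.prod ν)) :
    ∀ᵐ x ∂μ, MemLp (fun y => f (x, y)) 2 ν := by
  have hsq := (memLp_two_iff_integrable_sq_norm hf.1).1 hf
  filter_upwards [hf.1.prodMk_left, hsq.prod_right_ae] with x hxm hxi
  exact (memLp_two_iff_integrable_sq_norm hxm).2 hxi

lemma ProbabilityTheory.variance_sub_le {α : Type*} [MeasurableSpace α] {μ : Measure α}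
    [IsFiniteMeasure μ] {a b : α → ℝ} (ha : MemLp a 2 μ) (hb : MemLp b 2 μ) :
    Var[a - b; μ] ≤ 2 * Var[a; μ] + 2 * Var[b; μ] := by
  have hadd := variance_nonneg (a + b) μ
  rw [variance_add ha hb] at hadd
  rw [variance_sub ha hb]
  linarith

lemma Finset.sum_powerset_erase_insert_add {ι M : Type*} [Fintype ι] [DecidableEq ι]
    [AddCommMonoid M] (i : ι) (V : Finset ι → M) :
    ∑ S ∈ (univ.erase i).powerset, (V (insert i S) + V S) = ∑ T, V T := by
  calc ∑ S ∈ (univ.erase i).powerset, (V (insert i S) + V S)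
      = ∑ T ∈ (insert i (univ.erase i)).powerset, V T := by
        rw [sum_powerset_insert (notMem_erase i _), sum_add_distrib, add_comm]
    _ = ∑ T, V T := by rw [insert_erase (mem_univ i), powerset_univ]

section EmpiricalMean

variable {α Ω : Type*} {K : ℕ} {X : Fin K → Ω → α}

def empiricalMean (X : Fin K → Ω → α) (h : α → ℝ) (ω : Ω) : ℝ :=
  (K : ℝ)⁻¹ * ∑ k, h (X k ω)

lemma empiricalMean_sub (g h : α → ℝ) (ω : Ω) :
    empiricalMean X (g - h) ω = empiricalMean X g ω - empiricalMean X h ω := by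
  simp only [empiricalMean, Pi.sub_apply, sum_sub_distrib, mul_sub]

lemma empiricalMean_eq_smul_sum (h : α → ℝ) :
    empiricalMean X h = (K : ℝ)⁻¹ • ∑ k, fun ω => h (X k ω) := by
  ext ω
  simp [empiricalMean, Finset.sum_apply]

variable [MeasurableSpace α] [MeasurableSpace Ω] {P : Measure α} {Pr : Measure Ω}

lemma memLp_comp_of_map_eq {Y : Ω → α} (hY : AEMeasurable Y Pr) (hlaw : Pr.map Y = P)
    {h : α → ℝ} (hh : MemLp h 2 P) : MemLp (fun ω => h (Y ω)) 2 Pr := by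
  subst hlaw
  exact hh.comp_of_map hY

lemma memLp_empiricalMean (hX : ∀ k, AEMeasurable (X k) Pr) (hlaw : ∀ k, Pr.map (X k) = P)
    {h : α → ℝ} (hh : MemLp h 2 P) : MemLp (empiricalMean X h) 2 Pr := by
  rw [empiricalMean_eq_smul_sum]
  exact (memLp_finsetSum' _ fun k _ => memLp_comp_of_map_eq (hX k) (hlaw k) hh).const_smul _

lemma integral_empiricalMean [IsProbabilityMeasure Pr] (hK : K ≠ 0)
    (hX : ∀ k, AEMeasurable (X k) Pr) (hlaw : ∀ k, Pr.map (X k) = P) {h : α → ℝ}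
    (hh : Integrable h P) : ∫ ω, empiricalMean X h ω ∂Pr = ∫ x, h x ∂P := by
  have hcomp : ∀ k, ∫ ω, h (X k ω) ∂Pr = ∫ x, h x ∂P := fun k => by
    rw [← integral_map (hX k) ((hlaw k).symm ▸ hh.aestronglyMeasurable), hlaw k]
  simp only [empiricalMean]
  rw [integral_const_mul,
    integral_finsetSum _ fun k _ => ((hlaw k).symm ▸ hh).comp_aemeasurable (hX k)]
  simp only [hcomp, sum_const, card_univ, Fintype.card_fin, nsmul_eq_mul]
  field_simp

lemma variance_empiricalMean (hX : ∀ k, AEMeasurable (X k) Pr) (hlaw : ∀ k, Pr.map (X k) = P)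
    (hindep : iIndepFun X Pr) {h : α → ℝ} (hh : MemLp h 2 P) :
    Var[empiricalMean X h; Pr] = Var[h; P] / K := by
  have hcomp : ∀ k, Var[fun ω => h (X k ω); Pr] = Var[h; P] := fun k => by
    rw [← hlaw k, variance_map ((hlaw k).symm ▸ hh.aemeasurable) (hX k)]
    rfl
  have hpair : iIndepFun (fun k ω => h (X k ω)) Pr :=
    hindep.comp₀ (fun _ => h) hX fun k => (hlaw k).symm ▸ hh.aemeasurable
  rw [empiricalMean_eq_smul_sum, variance_smul,
    IndepFun.variance_sum (fun k _ => memLp_comp_of_map_eq (hX k) (hlaw k) hh)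
      fun k _ l _ hkl => hpair.indepFun hkl]
  simp only [hcomp, sum_const, card_univ, Fintype.card_fin, nsmul_eq_mul]
  rcases eq_or_ne (K : ℝ) 0 with hK | hK
  · simp [hK]
  · field_simp

lemma integral_sq_sub_empiricalMean [IsFiniteMeasure P] [IsProbabilityMeasure Pr]
    (hK : K ≠ 0) (hX : ∀ k, AEMeasurable (X k) Pr) (hlaw : ∀ k, Pr.map (X k) = P)
    (hindep : iIndepFun X Pr) {h : α → ℝ} (hh : MemLp h 2 P) :
    ∫ ω, (∫ x, h x ∂P - empiricalMean X h ω) ^ 2 ∂Pr = Var[h; P] / K := by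
  rw [← variance_empiricalMean hX hlaw hindep hh,
    variance_eq_integral (memLp_empiricalMean hX hlaw hh).aemeasurable,
    integral_empiricalMean hK hX hlaw (hh.integrable one_le_two)]
  congr with ω
  ring

end EmpiricalMean

lemma gameValue_sub (n : ℕ) (w : Finset (Fin n) → ℝ) (i : Fin n)
    (u v : Finset (Fin n) → ℝ) :
    gameValue n w i u - gameValue n w i v = gameValue n w i (u - v) := by
  rw [gameValue, gameValue, gameValue, ← sum_sub_distrib]
  exact sum_congr rfl fun S _ => by simp only [Pi.sub_apply]; ring

lemma sq_gameValue_le (n : ℕ) (w : Finset (Fin n) → ℝ) (i : Fin n)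
    (v : Finset (Fin n) → ℝ) :
    gameValue n w i v ^ 2 ≤ (∑ S ∈ (univ.erase i).powerset, w S ^ 2) *
      ∑ S ∈ (univ.erase i).powerset, (v (insert i S) - v S) ^ 2 :=
  sum_mul_sq_le_sq_mul_sq _ _ _

theorem integral_sq_gameValue_sub_empiricalMean_le {α Ω : Type*} [MeasurableSpace α]
    [MeasurableSpace Ω] {P : Measure α} [IsFiniteMeasure P] {Pr : Measure Ω}
    [IsProbabilityMeasure Pr] {K : ℕ} {X : Fin K → Ω → α} {n : ℕ} (w : Finset (Fin n) → ℝ)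
    (i : Fin n) (hK : K ≠ 0)
    (hX : ∀ k, AEMeasurable (X k) Pr) (hlaw : ∀ k, Pr.map (X k) = P)
    (hindep : iIndepFun X Pr) {g : Finset (Fin n) → α → ℝ} (hg : ∀ S, MemLp (g S) 2 P) :
    ∫ ω, (gameValue n w i (fun S => ∫ x, g S x ∂P) -
        gameValue n w i (fun S => empiricalMean X (g S) ω)) ^ 2 ∂Pr
      ≤ 2 / K * (∑ S ∈ (univ.erase i).powerset, w S ^ 2) * ∑ T, Var[g T; P] := by
  set pw := (univ.erase i).powerset with hpw
  set d : Finset (Fin n) → α → ℝ := fun S => g (insert i S) - g S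
  have hd : ∀ S, MemLp (d S) 2 P := fun S => (hg _).sub (hg _)
  set e : Finset (Fin n) → Ω → ℝ := fun S ω => ∫ x, d S x ∂P - empiricalMean X (d S) ω
  have he : ∀ S, Integrable (fun ω => e S ω ^ 2) Pr := fun S =>
    ((memLp_const _).sub (memLp_empiricalMean hX hlaw (hd S))).integrable_sq
  have hpointwise : ∀ ω, (gameValue n w i (fun S => ∫ x, g S x ∂P) -
      gameValue n w i (fun S => empiricalMean X (g S) ω)) ^ 2
        ≤ (∑ S ∈ pw, w S ^ 2) * ∑ S ∈ pw, e S ω ^ 2 := fun ω => by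
    rw [gameValue_sub]
    convert sq_gameValue_le n w i _ using 4 with S
    simp only [e, d, Pi.sub_apply, empiricalMean_sub,
      integral_sub ((hg _).integrable one_le_two) ((hg _).integrable one_le_two)]
    ring
  have hsplit : ∑ S ∈ pw, (2 * Var[g (insert i S); P] + 2 * Var[g S; P]) / K
      = 2 / K * ∑ S ∈ pw, (Var[g (insert i S); P] + Var[g S; P]) := by
    rw [mul_sum]
    exact sum_congr rfl fun S _ => by ring
  calc _ ≤ ∫ ω, (∑ S ∈ pw, w S ^ 2) * ∑ S ∈ pw, e S ω ^ 2 ∂Pr :=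
        integral_mono_of_nonneg (ae_of_all _ fun _ => sq_nonneg _)
          ((integrable_finsetSum _ fun S _ => he S).const_mul _) (ae_of_all _ hpointwise)
    _ = (∑ S ∈ pw, w S ^ 2) * ∑ S ∈ pw, Var[d S; P] / K := by
        rw [integral_const_mul, integral_finsetSum _ fun S _ => he S]
        simp only [e, integral_sq_sub_empiricalMean hK hX hlaw hindep (hd _)]
    _ ≤ (∑ S ∈ pw, w S ^ 2) *
          ∑ S ∈ pw, (2 * Var[g (insert i S); P] + 2 * Var[g S; P]) / K := by
        gcongr with S
        exact variance_sub_le (hg _) (hg _)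
    _ = _ := by
        rw [hsplit, hpw, sum_powerset_erase_insert_add i fun T => Var[g T; P]]
        ring

lemma measurable_merge (n : ℕ) (S : Finset (Fin n)) :
    Measurable fun q : (Fin n → ℝ) × (Fin n → ℝ) => merge n S q.1 q.2 :=
  measurable_pi_lambda _ fun j => by
    by_cases hj : j ∈ S <;> simp only [merge, hj, if_true, if_false] <;> fun_prop

lemma prodPart_le_smul_tildeP (n : ℕ) (P : Measure (Fin n → ℝ)) (S : Finset (Fin n)) :
    prodPart n P S ≤ (2 ^ n : ℝ≥0∞) • tildeP n P := by
  rw [tildeP, smul_smul, ENNReal.mul_inv_cancel (by positivity) (by simp), one_smul]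
  exact single_le_sum (f := prodPart n P) (fun _ _ => Measure.zero_le _) (mem_univ _)

lemma ae_memLp_merge {n : ℕ} {P : Measure (Fin n → ℝ)} [SFinite P] {f : (Fin n → ℝ) → ℝ}
    (hf : MemLp f 2 (tildeP n P)) :
    ∀ᵐ xs ∂P, ∀ S, MemLp (fun x => f (merge n S xs x)) 2 P := by
  rw [ae_all_iff]
  intro S
  have hS : MemLp f 2 (prodPart n P S) :=
    hf.of_measure_le_smul (by simp) (prodPart_le_smul_tildeP n P S)
  exact (hS.comp_of_map (measurable_merge n S).aemeasurable).prod_right_ae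

/-- Error bound for the empirical marginal game value.
Let `f ∈ L²(P̃_X)` and let `X^(1), …, X^(K)` be i.i.d. samples from `P_X` defined on a
probability space `(Ω, Pr)`. Then for `P_X`-almost every `x*` and every `i ∈ N`,
`E[ |h_i[N, v^{ME}] − h_i[N, v̂^{ME}]|² ] ≤ (2/K)·(∑_{S⊆N∖{i}} w_i(S,N)²)·(∑_{S⊆N} Var(f(x*_S, X_{-S})))`,
and the right-hand side is finite (each variance integrand is integrable). -/
theorem stmt2 (n : ℕ) (P : Measure (Fin n → ℝ)) [IsProbabilityMeasure P]
    (f : (Fin n → ℝ) → ℝ) (hf : MemLp f 2 (tildeP n P))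
    (w : Fin n → Finset (Fin n) → ℝ)
    {Ω : Type} [MeasurableSpace Ω] (Pr : Measure Ω) [IsProbabilityMeasure Pr]
    (K : ℕ) (hK : 0 < K) (X : Fin K → Ω → (Fin n → ℝ))
    (hXmeas : ∀ k, Measurable (X k))
    (hlaw : ∀ k, Measure.map (X k) Pr = P)
    (hindep : iIndepFun X Pr) :
    ∀ᵐ xs ∂P, ∀ i : Fin n,
      (∀ S : Finset (Fin n),
        Integrable (fun x => (f (merge n S xs x)) ^ 2) P) ∧
      ∫ ω, (gameValue n (w i) i (vME n P f xs) -
            gameValue n (w i) i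
              (fun S => (K : ℝ)⁻¹ * ∑ k, f (merge n S xs (X k ω)))) ^ 2 ∂Pr
        ≤ (2 / K) * (∑ S ∈ (univ.erase i).powerset, (w i S) ^ 2) *
            (∑ S : Finset (Fin n),
              ∫ x, (f (merge n S xs x) - vME n P f xs S) ^ 2 ∂P) := by
  filter_upwards [ae_memLp_merge hf] with xs hxs i
  refine ⟨fun S => (hxs S).integrable_sq, ?_⟩
  have hvar : ∀ S, ∫ x, (f (merge n S xs x) - vME n P f xs S) ^ 2 ∂P
      = Var[fun x => f (merge n S xs x); P] := fun S =>
    (variance_eq_integral (hxs S).aemeasurable).symm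
  simp only [hvar]
  exact integral_sq_gameValue_sub_empiricalMean_le (w i) i hK.ne'
    (fun k => (hXmeas k).aemeasurable) hlaw hindep hxs
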